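/- Let D ≥ d ≥ 1, let A be an associative k-algebra with |k| ≥ D+1, and let a_1, …, a_m ∈ A. Assume that for all α_1, …, α_m ∈ k, the element α_1 a_1 + … + α_m a_m is algebraic of degree at most d. Then P_D(a_1,…,a_m) ⊆ P_{≤ d−1}(a_1,…,a_m). -/

import Mathlib

/-!
Expanding `(α₁ a₁ + ⋯ + αₘ aₘ) ^ D` and collecting words by their letter counts gives
`∑_{|i| = D} αⁱ • p_i(a)`. Since the linear combination is algebraic of degree at most `d ≤ D`,
its `D`-th power lies in the span of its powers `1, …, d - 1`, hence in `P_{≤ d-1}`. So modulo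
`P_{≤ d-1}` the polynomial `α ↦ ∑_{|i| = D} αⁱ • [p_i(a)]` vanishes identically; its degree in
each variable is at most `D < |k|`, so by the combinatorial Nullstellensatz (composed with each
linear functional on the quotient) all its coefficients `[p_i(a)]` vanish.
-/

/-- `pWord a i` is the polynomial `p_{i_1,…,i_m}(a_1,…,a_m)`: the sum, over all distinct
words in `m` letters containing exactly `i_j` occurrences of letter `j` for each `j`,
of the corresponding products of `a_1,…,a_m`. -/
noncomputable def pWord {A : Type*} [Ring A] {m : ℕ} (a : Fin m → A) (i : Fin m → ℕ) : A :=
  ∑ w ∈ (Finset.univ : Finset (Fin (∑ j, i j) → Fin m)).filter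
      (fun w => ∀ j, (List.ofFn w).count j = i j),
    ((List.ofFn w).map a).prod

/-- `Pdeg k a n` is `P_n(a_1,…,a_m)`, the `k`-span of
`{p_{i_1,…,i_m}(a_1,…,a_m) : i_1+…+i_m = n}`. -/
noncomputable def Pdeg (k : Type*) [Field k] {A : Type*} [Ring A] [Algebra k A]
    {m : ℕ} (a : Fin m → A) (n : ℕ) : Submodule k A :=
  Submodule.span k {x | ∃ i : Fin m → ℕ, (∑ j, i j) = n ∧ x = pWord a i}

open Finset

theorem eq_zero_of_forall_sum_prod_pow_smul_eq_zero {k M σ : Type*} [Field k] [AddCommGroup M]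
    [Module k M] [Fintype σ] {S : Finset k} {s : Finset (σ → ℕ)} (q : (σ → ℕ) → M)
    (hdeg : ∀ i ∈ s, ∀ j, i j < #S)
    (heval : ∀ α : σ → k, (∀ j, α j ∈ S) → ∑ i ∈ s, (∏ j, α j ^ i j) • q i = 0) :
    ∀ i ∈ s, q i = 0 := by
  classical
  intro i₀ hi₀
  rw [← Module.forall_dual_apply_eq_zero_iff k]
  intro φ
  set e := (Finsupp.equivFunOnFinite (α := σ) (M := ℕ)).symm
  let P : MvPolynomial σ k := ∑ i ∈ s, MvPolynomial.monomial (e i) (φ (q i))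
  have hP : P = 0 := by
    refine MvPolynomial.eq_zero_of_eval_zero_at_prod_finset P (fun _ => S) (fun j => ?_)
      fun α hα => ?_
    · rw [MvPolynomial.degreeOf_lt_iff ((Nat.zero_le _).trans_lt (hdeg i₀ hi₀ j))]
      intro n hn
      obtain ⟨i, hi, hn⟩ := mem_biUnion.1 (MvPolynomial.support_sum hn)
      rw [mem_singleton.1 (MvPolynomial.support_monomial_subset hn)]
      exact hdeg i hi j
    · simpa [P, MvPolynomial.eval_monomial, Finsupp.prod_fintype, e, mul_comm] using
        congrArg φ (heval α hα)
  simpa [P, MvPolynomial.coeff_sum, MvPolynomial.coeff_monomial, e, hi₀] using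
    congrArg (MvPolynomial.coeff (e i₀)) hP

theorem List.prod_map_eq_prod_pow_count {ι M : Type*} [Fintype ι] [DecidableEq ι] [CommMonoid M]
    (l : List ι) (f : ι → M) : (l.map f).prod = ∏ j, f j ^ l.count j := by
  rw [Finset.prod_list_map_count]
  exact prod_subset (subset_univ _) fun j _ hj => by
    rw [List.count_eq_zero_of_not_mem (mt List.mem_toFinset.2 hj), pow_zero]

theorem List.sum_count_eq_length {ι : Type*} [Fintype ι] [DecidableEq ι] (l : List ι) :
    ∑ j, l.count j = l.length := by
  rw [← List.sum_toFinset_count_eq_length]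
  exact (sum_subset (subset_univ _) fun j _ hj =>
    List.count_eq_zero_of_not_mem (mt List.mem_toFinset.2 hj)).symm

section Semiring

variable {k A : Type*} [CommSemiring k] [Semiring A] [Algebra k A]

theorem pow_sum_smul_eq_sum_words {ι : Type*} [Fintype ι] (a : ι → A) (α : ι → k) (n : ℕ) :
    (∑ j, α j • a j) ^ n = ∑ w : Fin n → ι, (∏ t, α (w t)) • ((List.ofFn w).map a).prod := by
  classical
  have h := (MultilinearMap.mkPiAlgebraFin k n A).map_sum fun _ j => α j • a j
  simp only [MultilinearMap.map_smul_univ, MultilinearMap.mkPiAlgebraFin_apply, List.ofFn_const,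
    List.prod_replicate] at h
  simpa [List.map_ofFn, Function.comp_def] using h

theorem pow_mem_span_pow_Icc_of_le {b : A} {d n : ℕ}
    (h : b ^ d ∈ Submodule.span k ((b ^ ·) '' Set.Icc 1 (d - 1))) (hn : d ≤ n) :
    b ^ n ∈ Submodule.span k ((b ^ ·) '' Set.Icc 1 (d - 1)) := by
  set S := Submodule.span k ((b ^ ·) '' Set.Icc 1 (d - 1))
  have hmul : ∀ x ∈ S, x * b ∈ S := by
    intro x hx
    refine Submodule.span_induction ?_ (by simp) (fun _ _ _ _ => by rw [add_mul]; exact S.add_mem)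
      (fun c _ _ hy => by rw [smul_mul_assoc]; exact S.smul_mem c hy) hx
    rintro _ ⟨i, ⟨hi₁, hi₂⟩, rfl⟩
    rw [← pow_succ]
    by_cases hid : i + 1 = d
    · rwa [hid]
    · exact Submodule.subset_span ⟨i + 1, ⟨by omega, by omega⟩, rfl⟩
  induction n, hn using Nat.le_induction with
  | base => exact h
  | succ n _ ih => rw [pow_succ]; exact hmul _ ih

end Semiring

section Field

variable {k A : Type*} [Field k] [Ring A] [Algebra k A] {m : ℕ}

theorem pWord_eq_sum_filter (a : Fin m → A) {i : Fin m → ℕ} {n : ℕ} (h : ∑ j, i j = n) :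
    pWord a i = ∑ w : Fin n → Fin m with ∀ j, (List.ofFn w).count j = i j,
      ((List.ofFn w).map a).prod := by
  subst h; rfl

theorem pow_sum_smul_eq_sum_pWord (a : Fin m → A) (α : Fin m → k) (n : ℕ) :
    (∑ j, α j • a j) ^ n =
      ∑ i ∈ Nat.antidiagonalTuple m n, (∏ j, α j ^ i j) • pWord a i := by
  classical
  rw [pow_sum_smul_eq_sum_words, ← sum_fiberwise_of_maps_to (g := fun w j => (List.ofFn w).count j)
    (t := Nat.antidiagonalTuple m n) fun w _ => by
      simp [Nat.mem_antidiagonalTuple, List.sum_count_eq_length]]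
  refine sum_congr rfl fun i hi => ?_
  rw [pWord_eq_sum_filter a (Nat.mem_antidiagonalTuple.1 hi), smul_sum]
  refine sum_congr (filter_congr fun w _ => funext_iff) fun w hw => ?_
  simp only [← (mem_filter.1 hw).2]
  rw [← List.prod_map_eq_prod_pow_count, List.map_ofFn (g := α), List.prod_ofFn]
  rfl

theorem pow_sum_smul_mem_Pdeg (a : Fin m → A) (α : Fin m → k) (n : ℕ) :
    (∑ j, α j • a j) ^ n ∈ Pdeg k a n := by
  rw [pow_sum_smul_eq_sum_pWord]
  exact Submodule.sum_mem _ fun i hi => Submodule.smul_mem _ _ <|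
    Submodule.subset_span ⟨i, Nat.mem_antidiagonalTuple.1 hi, rfl⟩

end Field

theorem Pdeg_le_Ple_of_algebraic_bounded_general
    (k : Type*) [Field k] (A : Type*) [Ring A] [Algebra k A]
    (m d D : ℕ) (hD : d ≤ D)
    (hcard : (D + 1 : Cardinal) ≤ Cardinal.mk k)
    (a : Fin m → A)
    (h : ∀ α : Fin m → k, (∑ j, α j • a j) ^ d ∈
      Submodule.span k ((fun i : ℕ => (∑ j, α j • a j) ^ i) '' Set.Icc 1 (d - 1))) :
    Pdeg k a D ≤ ⨆ n ∈ Finset.Icc 1 (d - 1), Pdeg k a n := by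
  obtain ⟨S, hS⟩ := Cardinal.exists_finset_eq_card (n := D + 1) (by exact_mod_cast hcard)
  set N := ⨆ n ∈ Finset.Icc 1 (d - 1), Pdeg k a n
  have hpow : ∀ α : Fin m → k, (∑ j, α j • a j) ^ D ∈ N := by
    intro α
    refine Submodule.span_le.2 ?_ (pow_mem_span_pow_Icc_of_le (h α) hD)
    rintro _ ⟨n, hn, rfl⟩
    exact le_biSup (Pdeg k a) (by simpa using hn) (pow_sum_smul_mem_Pdeg a α n)
  rw [Pdeg, Submodule.span_le]
  rintro _ ⟨i, hi, rfl⟩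
  rw [SetLike.mem_coe, ← Submodule.Quotient.mk_eq_zero]
  refine eq_zero_of_forall_sum_prod_pow_smul_eq_zero (S := S) (fun i => N.mkQ (pWord a i))
    (fun i hi j => ?_) (fun α _ => ?_) i (Nat.mem_antidiagonalTuple.2 hi)
  · rw [← hS, Nat.lt_succ_iff, ← Nat.mem_antidiagonalTuple.1 hi]
    exact single_le_sum (fun _ _ => Nat.zero_le _) (mem_univ j)
  · simp_rw [← map_smul, ← map_sum, ← pow_sum_smul_eq_sum_pWord]
    exact (Submodule.Quotient.mk_eq_zero N).2 (hpow α)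

/-- Let `D ≥ d ≥ 1` and `|k| ≥ D+1`.  If every `α_1 a_1 + … + α_m a_m` is algebraic of
degree at most `d` (i.e. its `d`-th power is a `k`-linear combination of its powers
`1,…,d-1`), then `P_D(a_1,…,a_m) ⊆ P_{≤ d−1}(a_1,…,a_m)`. -/
theorem Pdeg_le_Ple_of_algebraic_bounded
    (k : Type*) [Field k] (A : Type*) [Ring A] [Algebra k A]
    (m d D : ℕ) (hd : 1 ≤ d) (hD : d ≤ D)
    (hcard : (D + 1 : Cardinal) ≤ Cardinal.mk k)
    (a : Fin m → A)
    (h : ∀ α : Fin m → k, (∑ j, α j • a j) ^ d ∈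
      Submodule.span k ((fun i : ℕ => (∑ j, α j • a j) ^ i) '' Set.Icc 1 (d - 1))) :
    Pdeg k a D ≤ ⨆ n ∈ Finset.Icc 1 (d - 1), Pdeg k a n :=
  Pdeg_le_Ple_of_algebraic_bounded_general k A m d D hD hcard a h
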